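/- For any natural number a and any finite multiset M of natural numbers, the map λ ∘ mir ∘ τ is an involution on the set L_{a,M}: it maps L_{a,M} to itself and applying it twice gives the identity. Moreover, this involution exchanges the statistics area and depth, i.e., for P ∈ L_{a,M} and P' = λ(mir(τ(P))), one has area(P') = depth(P) and depth(P') = area(P). -/

import Mathlib

/-! ## Plane trees -/

/-- A plane tree: a root together with an ordered (left-to-right) list of subtrees.
A node is a *leaf* if it has no children, and *internal* otherwise. -/
inductive PTree : Type where
  | node : List PTree → PTree


namespace Luka

/-! ## Łukasiewicz paths

A path is encoded by its list of step increments: the step `(1,k)` (an up-step `U_k` of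
degree `k`) is encoded by `k : ℤ` with `k ≥ 0`, and the down step `D = (1,-1)` by `-1`. -/

/-- `P` is a Łukasiewicz path: it is nonempty, uses steps `(1,k)` with `k ≥ -1`,
stays (weakly) above the `x`-axis before its last step, and ends at height `-1`
(so that it goes strictly below the axis only at the last step, which is forced
to be the down-step `D`). -/
def IsLukas (P : List ℤ) : Prop :=
  P ≠ [] ∧ (∀ s ∈ P, -1 ≤ s) ∧ (∀ n, n < P.length → 0 ≤ (P.take n).sum) ∧ P.sum = -1

/-- The degrees of the up-steps of `P`, from left to right (the *profile* of `P`). -/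
def upDegs (P : List ℤ) : List ℕ := (P.filter (fun s => 0 ≤ s)).map Int.toNat

/-- The profile multiset `𝔐(P)`: the multiset of degrees of the up-steps of `P`. -/
def profileM (P : List ℤ) : Multiset ℕ := (upDegs P : Multiset ℕ)

/-- The degree of the first up-step of `P`, if any. -/
def firstUp? (P : List ℤ) : Option ℕ := (upDegs P).head?

/-- The degree of the last up-step of `P`, if any. -/
def lastUp? (P : List ℤ) : Option ℕ := (upDegs P).getLast?

/-- Auxiliary: starting from height `h`, record the starting height of every up-step. -/
def areaVecAux : ℤ → List ℤ → List ℤ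
  | _, [] => []
  | h, s :: rest => (if 0 ≤ s then [h] else []) ++ areaVecAux (h + s) rest

/-- The area vector `Area(P)`: the `i`-th entry is the `y`-coordinate of the starting
point of the `i`-th up-step of `P`. -/
def areaVec (P : List ℤ) : List ℤ := areaVecAux 0 P

/-- `area(P)`: the sum of the entries of the area vector (entries of a Łukasiewicz
path are nonnegative, so taking `Int.toNat` entrywise is harmless). -/
def area (P : List ℤ) : ℕ := ((areaVec P).map Int.toNat).sum

/-- Auxiliary computation of the depth values: `cur` is the depth value of the previous
step (`0` initially), and `stack` holds the pending depth values of the future matching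
down-steps (top of the stack = value for the next matching down-step to come).
Reading an up-step `U_k` whose value is `cur` (inherited from the previous step) pushes
the values `cur+1, …, cur+k` for its `k` matching down-steps (its first matching
down-step, which crosses its topmost interior level, gets `cur+1`, etc.); reading a
down-step pops its value.  The list returned records the value `d_i` of each up-step,
from left to right. -/
def depthVecAux : ℕ → List ℕ → List ℤ → List ℕ
  | _, _, [] => []
  | cur, stack, s :: rest =>
    if 0 ≤ s then
      cur :: depthVecAux cur ((List.range s.toNat).map (fun i => cur + i + 1) ++ stack) rest
    else
      match stack with
      | [] => depthVecAux cur [] rest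
      | v :: st => depthVecAux v st rest

/-- The depth vector `Depth(P)`: the values `d_i` at the up-steps of `P`, left to right. -/
def depthVec (P : List ℤ) : List ℕ := depthVecAux 0 [] P

/-- `depth(P)`: the sum of the entries of the depth vector. -/
def depth (P : List ℤ) : ℕ := (depthVec P).sum

/-- `P ∈ 𝓛_M`. -/
def MemL (M : Multiset ℕ) (P : List ℤ) : Prop := IsLukas P ∧ profileM P = M

/-- `P ∈ 𝓛_{a,M}`: first up-step of degree `a`, profile multiset `M ⊎ {a}`. -/
def MemLa (a : ℕ) (M : Multiset ℕ) (P : List ℤ) : Prop :=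
  IsLukas P ∧ firstUp? P = some a ∧ profileM P = a ::ₘ M

/-- `P ∈ 𝓛_{M,b}`: last up-step of degree `b`, profile multiset `M ⊎ {b}`. -/
def MemLb (M : Multiset ℕ) (b : ℕ) (P : List ℤ) : Prop :=
  IsLukas P ∧ lastUp? P = some b ∧ profileM P = b ::ₘ M

/-- `P ∈ 𝓛_{a,M,b}`: first up-step of degree `a`, last up-step of degree `b`,
profile multiset `M ⊎ {a, b}`. -/
def MemLab (a : ℕ) (M : Multiset ℕ) (b : ℕ) (P : List ℤ) : Prop :=
  IsLukas P ∧ firstUp? P = some a ∧ lastUp? P = some b ∧ profileM P = a ::ₘ b ::ₘ M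

/-! ## Plane-tree statistics -/

/-- The (ordered) children of the root of a plane tree. -/
def children : PTree → List PTree
  | .node ts => ts

/-- The degree of (the root of) a plane tree: its number of children. -/
def numChildren (t : PTree) : ℕ := (children t).length

mutual
/-- Number of internal nodes of a plane tree. -/
def internCount : PTree → ℕ
  | .node [] => 0
  | .node (t :: ts) => 1 + internCountL (t :: ts)
def internCountL : List PTree → ℕ
  | [] => 0
  | t :: ts => internCount t + internCountL ts
end

mutual
/-- `lthornT T` = the sum of `lthorn(u)` over all internal nodes `u` of `T`, where
`lthorn(u)` is the number of descending edges of strict ancestors `v` of `u` lying to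
the left of the path from `v` to `u`.  (Every internal node of the subtree rooted at
the `i`-th child (0-indexed) of a node gains `i` left thorns from that node.) -/
def lthornT : PTree → ℕ
  | .node ts => lthornL 0 ts
def lthornL : ℕ → List PTree → ℕ
  | _, [] => 0
  | i, t :: ts => lthornT t + i * internCount t + lthornL (i + 1) ts
end

mutual
/-- `rthornT T` = the sum of `rthorn(u)` over all internal nodes `u` of `T`, where
`rthorn(u)` is the number of descending edges of strict ancestors `v` of `u` lying to
the right of the path from `v` to `u`. -/
def rthornT : PTree → ℕ
  | .node ts => rthornL ts
def rthornL : List PTree → ℕ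
  | [] => 0
  | t :: ts => rthornT t + ts.length * internCount t + rthornL ts
end

mutual
/-- The list of the values `lthorn(u)` for the internal nodes `u` of `T`, in
contour-walk (preorder) order. -/
def lthornList : PTree → List ℕ
  | .node [] => []
  | .node (t :: ts) => 0 :: lthornLL 0 (t :: ts)
def lthornLL : ℕ → List PTree → List ℕ
  | _, [] => []
  | i, t :: ts => (lthornList t).map (· + i) ++ lthornLL (i + 1) ts
end

mutual
/-- The list of the values `rthorn(u)` for the internal nodes `u` of `T`, in
contour-walk (preorder) order. -/
def rthornList : PTree → List ℕ
  | .node [] => []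
  | .node (t :: ts) => 0 :: rthornLL (t :: ts)
def rthornLL : List PTree → List ℕ
  | [] => []
  | t :: ts => (rthornList t).map (· + ts.length) ++ rthornLL ts
end

/-! ## The bijections `λ` and `τ` -/

mutual
/-- `λ`: record each node of the tree at its first visit in the left-to-right contour
walk: `U_k` (i.e. `k`) for an internal node with `k+1` children, `D` (i.e. `-1`)
for a leaf. -/
def lambdaT : PTree → List ℤ
  | .node ts => ((ts.length : ℤ) - 1) :: lambdaL ts
def lambdaL : List PTree → List ℤ
  | [] => []
  | t :: ts => lambdaT t ++ lambdaL ts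
end

/-- Auxiliary for `τ`: reading the path from right to left, maintain the stack of the
already-built subtrees (in left-to-right order); a down-step `D` creates a leaf and an
up-step `U_k` grabs the `k+1` topmost subtrees as its children.  This builds the same
tree as the left-to-right "leftmost bud" construction. -/
def tauStack (P : List ℤ) : List PTree :=
  P.foldr (fun s st =>
    if s < 0 then PTree.node [] :: st
    else PTree.node (st.take (s.toNat + 1)) :: st.drop (s.toNat + 1)) []

/-- `τ`: the plane tree associated with a Łukasiewicz path. -/
def tau (P : List ℤ) : PTree := (tauStack P).headD (.node [])

mutual
/-- The mirror of a plane tree: reverse the left-to-right order of the children of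
every internal node. -/
def mir : PTree → PTree
  | .node ts => .node (mirL ts).reverse
def mirL : List PTree → List PTree
  | [] => []
  | t :: ts => mir t :: mirL ts
end

mutual
/-- The subtrees rooted at the internal nodes of `T`, in contour-walk (preorder)
order. -/
def internalSubtrees : PTree → List PTree
  | .node [] => []
  | .node (t :: ts) => .node (t :: ts) :: internalSubtreesL (t :: ts)
def internalSubtreesL : List PTree → List PTree
  | [] => []
  | t :: ts => internalSubtrees t ++ internalSubtreesL ts
end

/-- The multiset of degrees of the non-root internal nodes of `T`. -/
def nonRootInternalDegs (T : PTree) : Multiset ℕ :=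
  (((internalSubtreesL (children T)).map numChildren : List ℕ) : Multiset ℕ)

/-! ## Lodestars and the lodestar swap -/

/-- A node is a lodestar-type node if it is internal and all its children are leaves. -/
def isLodestarNode (t : PTree) : Bool :=
  !(children t).isEmpty && (children t).all (fun c => (children c).isEmpty)

mutual
/-- The subtree rooted at the *left lodestar* of `T`: the first internal node, in
contour-walk (preorder) order, all of whose children are leaves (if it exists). -/
def leftLode? : PTree → Option PTree
  | .node ts =>
    if isLodestarNode (.node ts) then some (.node ts) else leftLodeL? ts
def leftLodeL? : List PTree → Option PTree
  | [] => none
  | t :: ts =>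
    match leftLode? t with
    | some r => some r
    | none => leftLodeL? ts
end

mutual
/-- The subtree rooted at the *right lodestar* of `T`: the last internal node, in
contour-walk (preorder) order, all of whose children are leaves (if it exists). -/
def rightLode? : PTree → Option PTree
  | .node ts =>
    match rightLodeL? ts with
    | some r => some r
    | none => if isLodestarNode (.node ts) then some (.node ts) else none
def rightLodeL? : List PTree → Option PTree
  | [] => none
  | t :: ts =>
    match rightLodeL? ts with
    | some r => some r
    | none => rightLode? t
end

mutual
/-- Replace the left lodestar of `T` (first preorder all-leaf-children internal node)
by the tree `r`; `none` if `T` has no internal node. -/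
def replF : PTree → PTree → Option PTree
  | r, .node ts =>
    if isLodestarNode (.node ts) then some r
    else (replFL r ts).map PTree.node
def replFL : PTree → List PTree → Option (List PTree)
  | _, [] => none
  | r, t :: ts =>
    match replF r t with
    | some t' => some (t' :: ts)
    | none => (replFL r ts).map (t :: ·)
end

mutual
/-- Replace the right lodestar of `T` (last preorder all-leaf-children internal node)
by the tree `r`; `none` if `T` has no internal node. -/
def replL : PTree → PTree → Option PTree
  | r, .node ts =>
    match replLL r ts with
    | some ts' => some (.node ts')
    | none => if isLodestarNode (.node ts) then some r else none
def replLL : PTree → List PTree → Option (List PTree)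
  | _, [] => none
  | r, t :: ts =>
    match replLL r ts with
    | some ts' => some (t :: ts')
    | none => (replL r t).map (· :: ts)
end

/-- The lodestar swap: exchange the subtrees rooted at the left lodestar and the
right lodestar of `T` (each a node together with its pendant leaves). -/
def lodeSwap (T : PTree) : PTree :=
  match leftLode? T, rightLode? T with
  | some L, some R => ((replF R T).bind (replL L)).getD T
  | _, _ => T


/-!
Through `τ` and `λ`, which are mutually inverse, a Łukasiewicz path is a plane tree read in
preorder. The `i`-th up-step starts at a height equal to the number of descending edges to the
right of the ancestry path of the `i`-th internal node (its right thorns), and its depth value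
is the number of such edges to the left (its left thorns). Mirroring swaps left and right thorns,
keeps the degree of the root and the multiset of node degrees, and is an involution.
-/

theorem lambdaL_append (ts us : List PTree) :
    lambdaL (ts ++ us) = lambdaL ts ++ lambdaL us := by
  induction ts with
  | nil => rfl
  | cons t ts ih => simp [lambdaL, ih]

theorem lambdaL_singleton (t : PTree) : lambdaL [t] = lambdaT t := by
  simp [lambdaL]

mutual
theorem sum_lambdaT : ∀ T : PTree, (lambdaT T).sum = -1
  | .node ts => by rw [lambdaT, List.sum_cons, sum_lambdaL ts]; ring
theorem sum_lambdaL : ∀ ts : List PTree, (lambdaL ts).sum = -(ts.length : ℤ)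
  | [] => rfl
  | t :: ts => by simp [lambdaL, sum_lambdaT t, sum_lambdaL ts]
end

mutual
theorem neg_one_le_of_mem_lambdaT : ∀ (T : PTree), ∀ s ∈ lambdaT T, -1 ≤ s
  | .node ts, s, hs => by
    rcases List.mem_cons.1 hs with rfl | hs
    · omega
    · exact neg_one_le_of_mem_lambdaL ts s hs
theorem neg_one_le_of_mem_lambdaL : ∀ (ts : List PTree), ∀ s ∈ lambdaL ts, -1 ≤ s
  | t :: ts, s, hs => by
    rcases List.mem_append.1 hs with hs | hs
    · exact neg_one_le_of_mem_lambdaT t s hs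
    · exact neg_one_le_of_mem_lambdaL ts s hs
end

mutual
theorem sum_take_lambdaT_nonneg : ∀ (T : PTree) (n : ℕ), n < (lambdaT T).length →
    0 ≤ ((lambdaT T).take n).sum
  | _, 0, _ => by simp
  | .node ts, n + 1, hn => by
    have := sum_take_lambdaL ts n (by simpa [lambdaT] using hn)
    simp only [lambdaT, List.take_succ_cons, List.sum_cons]
    omega
theorem sum_take_lambdaL : ∀ (ts : List PTree) (n : ℕ), n < (lambdaL ts).length →
    1 - (ts.length : ℤ) ≤ ((lambdaL ts).take n).sum
  | t :: ts, n, hn => by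
    simp only [lambdaL, List.take_append, List.sum_append, List.length_cons] at hn ⊢
    by_cases ht : n < (lambdaT t).length
    · have := sum_take_lambdaT_nonneg t n ht
      rw [Nat.sub_eq_zero_of_le ht.le, List.take_zero, List.sum_nil, add_zero]
      push_cast
      omega
    · rw [List.take_of_length_le (by omega), sum_lambdaT t]
      have := sum_take_lambdaL ts (n - (lambdaT t).length)
        (by rw [List.length_append] at hn; omega)
      push_cast
      omega
end

theorem isLukas_lambdaT (T : PTree) : IsLukas (lambdaT T) := by
  obtain ⟨ts⟩ := T
  exact ⟨by simp [lambdaT], neg_one_le_of_mem_lambdaT _, sum_take_lambdaT_nonneg _,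
    sum_lambdaT _⟩

theorem tauStack_cons (s : ℤ) (P : List ℤ) :
    tauStack (s :: P) = if s < 0 then PTree.node [] :: tauStack P
      else PTree.node ((tauStack P).take (s.toNat + 1)) :: (tauStack P).drop (s.toNat + 1) :=
  rfl

mutual
theorem tauStack_lambdaT_append : ∀ (T : PTree) (rest : List ℤ),
    tauStack (lambdaT T ++ rest) = T :: tauStack rest
  | .node [], rest => by simp [lambdaT, lambdaL, tauStack_cons]
  | .node (t :: ts), rest => by
    have hk : ((ts.length + 1 : ℕ) - 1 : ℤ).toNat + 1 = (t :: ts).length := by simp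
    rw [lambdaT, List.cons_append, tauStack_cons, tauStack_lambdaL_append (t :: ts) rest,
      if_neg (by simp), List.length_cons, hk, List.take_left, List.drop_left]
theorem tauStack_lambdaL_append : ∀ (ts : List PTree) (rest : List ℤ),
    tauStack (lambdaL ts ++ rest) = ts ++ tauStack rest
  | [], rest => rfl
  | t :: ts, rest => by
    rw [lambdaL, List.append_assoc, tauStack_lambdaT_append t, tauStack_lambdaL_append ts rest]
    rfl
end

theorem tau_lambdaT (T : PTree) : tau (lambdaT T) = T := by
  simpa [tau] using congrArg (List.headD · (.node [])) (tauStack_lambdaT_append T [])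

/-- Read from the right, a path whose suffixes all go below their starting height is a forest:
`tauStack` recovers it, one tree per unit of descent. -/
theorem lambdaL_tauStack : ∀ (P : List ℤ), (∀ s ∈ P, -1 ≤ s) →
    (∀ n < P.length, (P.drop n).sum ≤ -1) →
    lambdaL (tauStack P) = P ∧ ((tauStack P).length : ℤ) = -P.sum
  | [], _, _ => by simp [tauStack, lambdaL]
  | s :: P, hstep, hdrop => by
    obtain ⟨ih, hlen⟩ := lambdaL_tauStack P (fun x hx => hstep x (List.mem_cons_of_mem s hx))
      (fun n hn => hdrop (n + 1) (by simpa using hn))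
    have hsum : s + P.sum ≤ -1 := by simpa using hdrop 0 (by simp)
    have hs : -1 ≤ s := hstep s List.mem_cons_self
    rw [tauStack_cons]
    split_ifs with hneg
    · obtain rfl : s = -1 := by omega
      simp [lambdaL, lambdaT, ih, hlen]
    · have htake : ((tauStack P).take (s.toNat + 1)).length = s.toNat + 1 := by
        rw [List.length_take]; omega
      refine ⟨?_, ?_⟩
      · rw [lambdaL, lambdaT, htake, List.cons_append, ← lambdaL_append,
          List.take_append_drop, ih]
        congr 1
        omega
      · simp only [List.length_cons, List.length_drop, List.sum_cons]
        omega

theorem lambdaT_tau {P : List ℤ} (h : IsLukas P) : lambdaT (tau P) = P := by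
  obtain ⟨-, hstep, htake, hsum⟩ := h
  have hdrop : ∀ n < P.length, (P.drop n).sum ≤ -1 := fun n hn => by
    have := List.sum_take_add_sum_drop P n
    have := htake n hn
    omega
  obtain ⟨hforest, hlen⟩ := lambdaL_tauStack P hstep hdrop
  obtain ⟨T, hT⟩ := List.length_eq_one_iff.mp (by omega : (tauStack P).length = 1)
  rw [hT, lambdaL_singleton] at hforest
  rw [tau, hT, List.headD_cons, hforest]

theorem mirL_eq_map (ts : List PTree) : mirL ts = ts.map mir := by
  induction ts with
  | nil => rfl
  | cons t ts ih => simp [mirL, ih]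

theorem mir_node (ts : List PTree) : mir (.node ts) = .node (ts.map mir).reverse := by
  rw [mir, mirL_eq_map]

mutual
theorem mir_mir : ∀ T : PTree, mir (mir T) = T
  | .node ts => by
    rw [mir_node, mir_node, List.map_reverse, List.reverse_reverse, List.map_map,
      map_mir_mir ts]
theorem map_mir_mir : ∀ ts : List PTree, ts.map (mir ∘ mir) = ts
  | [] => rfl
  | t :: ts => by rw [List.map_cons, Function.comp_apply, mir_mir t, map_mir_mir ts]
end

theorem upDegs_append (l₁ l₂ : List ℤ) : upDegs (l₁ ++ l₂) = upDegs l₁ ++ upDegs l₂ := by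
  simp [upDegs]

mutual
theorem upDegs_lambdaT_mir_perm : ∀ T : PTree,
    (upDegs (lambdaT (mir T))).Perm (upDegs (lambdaT T))
  | .node ts => by
    have h := (upDegs_lambdaL_map_mir_perm ts).append_left (upDegs [(ts.length : ℤ) - 1])
    rw [← upDegs_append, ← upDegs_append] at h
    simpa [mir_node, lambdaT] using h
theorem upDegs_lambdaL_map_mir_perm : ∀ ts : List PTree,
    (upDegs (lambdaL (ts.map mir).reverse)).Perm (upDegs (lambdaL ts))
  | [] => .rfl
  | t :: ts => by
    rw [List.map_cons, List.reverse_cons, lambdaL_append, lambdaL_singleton, lambdaL,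
      upDegs_append, upDegs_append]
    exact ((upDegs_lambdaL_map_mir_perm ts).append (upDegs_lambdaT_mir_perm t)).trans
      List.perm_append_comm
end

theorem profileM_lambdaT_mir (T : PTree) : profileM (lambdaT (mir T)) = profileM (lambdaT T) :=
  Multiset.coe_eq_coe.mpr (upDegs_lambdaT_mir_perm T)

theorem firstUp?_lambdaT_mir (T : PTree) :
    firstUp? (lambdaT (mir T)) = firstUp? (lambdaT T) := by
  obtain ⟨_ | ⟨t, ts⟩⟩ := T
  · rfl
  · simp [mir_node, lambdaT, firstUp?, upDegs]

theorem memLa_lambdaT_mir {a : ℕ} {M : Multiset ℕ} {T : PTree} (h : MemLa a M (lambdaT T)) :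
    MemLa a M (lambdaT (mir T)) :=
  ⟨isLukas_lambdaT _, (firstUp?_lambdaT_mir T).trans h.2.1,
    (profileM_lambdaT_mir T).trans h.2.2⟩

theorem areaVecAux_append (h : ℤ) (xs ys : List ℤ) :
    areaVecAux h (xs ++ ys) = areaVecAux h xs ++ areaVecAux (h + xs.sum) ys := by
  induction xs generalizing h with
  | nil => simp [areaVecAux]
  | cons s xs ih => simp [areaVecAux, ih, add_assoc]

mutual
theorem areaVecAux_lambdaT : ∀ (T : PTree) (h : ℤ),
    areaVecAux h (lambdaT T) = (rthornList T).map (fun n : ℕ => (n : ℤ) + h)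
  | .node [], h => by simp [lambdaT, lambdaL, areaVecAux, rthornList]
  | .node (t :: ts), h => by
    have := areaVecAux_lambdaL (t :: ts) h
    rw [List.length_cons, Nat.cast_succ, ← add_assoc, add_sub_cancel_right] at this
    simp [lambdaT, areaVecAux, rthornList, this]
theorem areaVecAux_lambdaL : ∀ (ts : List PTree) (h : ℤ),
    areaVecAux (h + ts.length - 1) (lambdaL ts) = (rthornLL ts).map (fun n : ℕ => (n : ℤ) + h)
  | [], h => rfl
  | t :: ts, h => by
    have hlast : h + ((t :: ts).length : ℤ) - 1 + -1 = h + ts.length - 1 := by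
      rw [List.length_cons, Nat.cast_succ]; ring
    rw [lambdaL, areaVecAux_append, sum_lambdaT, areaVecAux_lambdaT t, hlast,
      areaVecAux_lambdaL ts h, rthornLL, List.map_append, List.map_map]
    congr 1
    refine List.map_congr_left fun n _ => ?_
    simp only [Function.comp_apply, List.length_cons]
    push_cast
    ring
end

theorem area_lambdaT (T : PTree) : area (lambdaT T) = (rthornList T).sum := by
  simp [area, areaVec, areaVecAux_lambdaT, List.map_map, Function.comp_def]

theorem map_add_lthornLL (i c : ℕ) (ts : List PTree) :
    (lthornLL i ts).map (· + c) = lthornLL (i + c) ts := by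
  induction ts generalizing i with
  | nil => rfl
  | cons t ts ih =>
    simp only [lthornLL, List.map_append, List.map_map, ih, Function.comp_def]
    congr 2
    · funext n; omega
    · omega

theorem depthVecAux_cons_of_nonneg (c : ℕ) (st : List ℕ) {s : ℤ} (hs : 0 ≤ s)
    (rest : List ℤ) :
    depthVecAux c st (s :: rest)
      = c :: depthVecAux c ((List.range s.toNat).map (fun i => c + i + 1) ++ st) rest := by
  simp [depthVecAux, hs]

mutual
/-- Popping from an empty stack (only the final down-step of a whole path does so) keeps the
current value instead of reading one off the stack, hence the hypothesis `st ≠ [] ∨ rest = []`. -/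
theorem depthVecAux_lambdaT_append : ∀ (T : PTree) (c : ℕ) (st : List ℕ) (rest : List ℤ),
    st ≠ [] ∨ rest = [] →
    depthVecAux c st (lambdaT T ++ rest)
      = (lthornList T).map (· + c) ++ depthVecAux (st.headD 0) st.tail rest
  | .node [], c, [], rest, h => by
    obtain rfl : rest = [] := by simpa using h
    simp [lambdaT, lambdaL, depthVecAux, lthornList]
  | .node [], c, v :: st, rest, _ => by simp [lambdaT, lambdaL, depthVecAux, lthornList]
  | .node (t :: ts), c, st, rest, h => by
    have hk : ((ts.length + 1 : ℕ) - 1 : ℤ).toNat = ts.length := by simp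
    rw [lambdaT, List.cons_append, depthVecAux_cons_of_nonneg _ _ (by simp), List.length_cons,
      hk,
      depthVecAux_lambdaL_append t ts c st rest h, lthornList, List.map_cons,
      map_add_lthornLL, zero_add, List.cons_append]
termination_by T => sizeOf T
theorem depthVecAux_lambdaL_append : ∀ (t : PTree) (ts : List PTree) (c : ℕ) (st : List ℕ)
    (rest : List ℤ), st ≠ [] ∨ rest = [] →
    depthVecAux c ((List.range ts.length).map (fun i => c + i + 1) ++ st)
        (lambdaL (t :: ts) ++ rest)
      = lthornLL c (t :: ts) ++ depthVecAux (st.headD 0) st.tail rest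
  | t, [], c, st, rest, h => by
    simpa [lambdaL, lthornLL] using depthVecAux_lambdaT_append t c st rest h
  | t, t' :: ts, c, st, rest, h => by
    rw [lambdaL, List.append_assoc, List.length_cons, List.range_succ_eq_map, List.map_cons,
      List.cons_append, depthVecAux_lambdaT_append t c _ _ (.inl (by simp)),
      List.headD_cons, List.tail_cons, List.map_map]
    have := depthVecAux_lambdaL_append t' ts (c + 1) st rest h
    simp only [lthornLL, List.append_assoc] at this ⊢
    rw [← this]
    congr 3
    exact List.map_congr_left fun i _ => by simp only [Function.comp_apply]; omega
termination_by t ts => sizeOf t + sizeOf ts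
end

theorem depth_lambdaT (T : PTree) : depth (lambdaT T) = (lthornList T).sum := by
  simpa [depth, depthVec, depthVecAux] using
    congrArg List.sum (depthVecAux_lambdaT_append T 0 [] [] (.inr rfl))

theorem lthornLL_append (i : ℕ) (us vs : List PTree) :
    lthornLL i (us ++ vs) = lthornLL i us ++ lthornLL (i + us.length) vs := by
  induction us generalizing i with
  | nil => rfl
  | cons u us ih => simp [lthornLL, ih, Nat.add_right_comm, Nat.add_assoc]

theorem lthornList_node {ts : List PTree} (hts : ts ≠ []) :
    lthornList (.node ts) = 0 :: lthornLL 0 ts := by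
  obtain _ | ⟨t, ts⟩ := ts
  · exact absurd rfl hts
  · rfl

mutual
theorem lthornList_mir_perm : ∀ T : PTree, (lthornList (mir T)).Perm (rthornList T)
  | .node [] => .rfl
  | .node (t :: ts) => by
    rw [mir_node, lthornList_node (by simp), rthornList]
    simpa using (lthornLL_map_mir_perm (t :: ts) 0).cons 0
theorem lthornLL_map_mir_perm : ∀ (ts : List PTree) (i : ℕ),
    (lthornLL i (ts.map mir).reverse).Perm ((rthornLL ts).map (· + i))
  | [], _ => .rfl
  | t :: ts, i => by
    rw [List.map_cons, List.reverse_cons, lthornLL_append, List.length_reverse,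
      List.length_map, rthornLL, List.map_append, List.map_map]
    refine ((lthornLL_map_mir_perm ts i).append ?_).trans List.perm_append_comm
    simpa [lthornLL, Function.comp_def, Nat.add_assoc, Nat.add_comm i] using
      (lthornList_mir_perm t).map (· + (i + ts.length))
end

theorem area_lambdaT_mir (T : PTree) : area (lambdaT (mir T)) = depth (lambdaT T) := by
  rw [area_lambdaT, depth_lambdaT, ← (lthornList_mir_perm (mir T)).sum_eq, mir_mir]

theorem depth_lambdaT_mir (T : PTree) : depth (lambdaT (mir T)) = area (lambdaT T) := by
  rw [area_lambdaT, depth_lambdaT, (lthornList_mir_perm T).sum_eq]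

end Luka

open Luka in
/-- The map `λ ∘ mir ∘ τ` is an involution on `𝓛_{a,M}` exchanging `area` and `depth`:
it maps `𝓛_{a,M}` to itself, applying it twice is the identity, and for
`P' = λ(mir(τ(P)))` one has `area(P') = depth(P)` and `depth(P') = area(P)`. -/
theorem lambda_mir_tau_involution (a : ℕ) (M : Multiset ℕ) :
    (∀ P, MemLa a M P → MemLa a M (lambdaT (mir (tau P)))) ∧
    (∀ P, MemLa a M P → lambdaT (mir (tau (lambdaT (mir (tau P))))) = P) ∧
    (∀ P, MemLa a M P →
      area (lambdaT (mir (tau P))) = depth P ∧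
      depth (lambdaT (mir (tau P))) = area P) := by
  refine ⟨fun P hP => ?_, fun P hP => ?_, fun P hP => ?_⟩
  · rw [← lambdaT_tau hP.1] at hP
    exact memLa_lambdaT_mir hP
  · rw [tau_lambdaT, mir_mir, lambdaT_tau hP.1]
  · rw [area_lambdaT_mir, depth_lambdaT_mir, lambdaT_tau hP.1]
    exact ⟨rfl, rfl⟩
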